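/- arXiv:2009.05969 — 2 statements merged into one kernel-verified Lean document; each statement's English description precedes it below -/
import Mathlib

section
/- Let n ≥ rk, k,r ≥ 2, 0 ≤ s < k, n > a+s, and a ≤ k-s-1. Then ecd^r(H(n,k,a,s), s) = n - r(k-s-1). -/
open Finset

/-- `A ⊆ₛ B`: there exists `E` with `|E| ≤ s` and `A \ E ⊆ B`. -/
def subS {α : Type*} [DecidableEq α] (s : ℕ) (A B : Finset α) : Prop :=
  ∃ E : Finset α, E.card ≤ s ∧ A \ E ⊆ B

/-- `X` is an equitable partition of `G` (pairwise disjoint parts, union `G`,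
part sizes pairwise differing by at most 1). -/
def EquitableParts {ι α : Type*} [Fintype ι] [DecidableEq α]
    (G : Finset α) (X : ι → Finset α) : Prop :=
  (∀ i j, i ≠ j → Disjoint (X i) (X j)) ∧
  Finset.univ.biUnion X = G ∧
  ∀ i j, (X i).card ≤ (X j).card + 1

/-- Generalized equitable `r`-colorability defect `ecd^r(F, s)` on ground set `G`. -/
noncomputable def ecd {α : Type*} [DecidableEq α] (G : Finset α) (r s : ℕ)
    (F : Set (Finset α)) : ℕ :=
  sInf {m | ∃ X0 ⊆ G, X0.card = m ∧ ∃ X : Fin r → Finset α,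
    EquitableParts (G \ X0) X ∧ ∀ A ∈ F, ∀ i, ¬ subS s A (X i)}

/-- Equitable `r`-colorability defect (plain containment). -/
noncomputable def ecd0 {α : Type*} [DecidableEq α] (G : Finset α) (r : ℕ)
    (F : Set (Finset α)) : ℕ :=
  sInf {m | ∃ X0 ⊆ G, X0.card = m ∧ ∃ X : Fin r → Finset α,
    EquitableParts (G \ X0) X ∧ ∀ A ∈ F, ∀ i, ¬ A ⊆ X i}

/-- The family of all `k`-subsets of `[n] = {1, …, n}`. -/
def kSubsets (n k : ℕ) : Set (Finset ℕ) :=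
  {F | F ⊆ Finset.Icc 1 n ∧ F.card = k}

/-- The family `H(n,k,a,s)` of `k`-subsets `F` of `[n]` with `F ⊄ₛ {n-a+1,…,n}`. -/
def Hfam (n k a s : ℕ) : Set (Finset ℕ) :=
  {F | F ⊆ Finset.Icc 1 n ∧ F.card = k ∧ ¬ subS s F (Finset.Icc (n - a + 1) n)}

/-- The family of `t`-wide `k`-subsets of `[n]`. -/
def tWide (n k t : ℕ) : Set (Finset ℕ) :=
  {F | F ⊆ Finset.Icc 1 n ∧ F.card = k ∧
    ∀ i ∈ Finset.Icc 1 (n - t + 1), ¬ F ⊆ Finset.Icc i (i + t - 1)}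

/-- `P` is a partition of `[n]` into pairwise disjoint pieces. -/
def IsPartition (n : ℕ) (P : Finset (Finset ℕ)) : Prop :=
  (∀ p ∈ P, ∀ q ∈ P, p ≠ q → Disjoint p q) ∧ P.sup id = Finset.Icc 1 n

/-- `A` is `P`-admissible: it meets every part of `P` in at most one element. -/
def Adm (P : Finset (Finset ℕ)) (A : Finset ℕ) : Prop :=
  ∀ p ∈ P, (A ∩ p).card ≤ 1

/-!
As `|A| ≤ a` and `a + s < k`, no `k`-set is `s`-almost contained in `A`, so `H(n,k,a,s)` consists
of all `k`-subsets of `[n]`, and a part `s`-almost contains one of them as soon as it has `k - s`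
points (fill up with `s` arbitrary further points of `[n]`). Hence every part of an admissible
coloring has at most `k-s-1` points, so at most `r(k-s-1)` points are colored; coloring
`[r(k-s-1)]` by `r` consecutive blocks of length `k-s-1` attains this.
-/

section Coloring

variable {α : Type*} [DecidableEq α]

lemma not_subS_of_card_add_lt {s : ℕ} {F B : Finset α} (h : #B + s < #F) : ¬ subS s F B := by
  rintro ⟨E, hE, hFE⟩
  have := card_le_card hFE
  have := card_le_card_sdiff_add_card (s := F) (t := E)
  omega

lemma exists_card_eq_subS {s k : ℕ} {B G : Finset α} (hBG : B ⊆ G) (hkB : k ≤ #B + s)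
    (hkG : k ≤ #G) : ∃ F ⊆ G, #F = k ∧ subS s F B := by
  obtain ⟨S, hSB, hS⟩ := exists_subset_card_eq (s := B) (n := k - s) (by omega)
  obtain ⟨F, hSF, hFG, hF⟩ := exists_subsuperset_card_eq (hSB.trans hBG) (by omega) hkG
  refine ⟨F, hFG, hF, F \ S, ?_, ?_⟩
  · rw [card_sdiff_of_subset hSF]
    omega
  · rw [sdiff_sdiff_right_self]
    exact inter_subset_right.trans hSB

lemma exists_lt_card_of_biUnion_eq {ι : Type*} [Fintype ι] {X : ι → Finset α} {G : Finset α}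
    {t : ℕ} (hX : univ.biUnion X = G) (hG : Fintype.card ι * t < #G) : ∃ i, t < #(X i) := by
  by_contra! h
  have := calc #G = #(univ.biUnion X) := by rw [hX]
    _ ≤ ∑ i, #(X i) := card_biUnion_le
    _ ≤ #(univ : Finset ι) • t := sum_le_card_nsmul _ _ _ fun i _ => h i
  simp only [card_univ, smul_eq_mul] at this
  omega

/-- `X₀` and `X` witness the value `#X₀` in the definition of `ecd G r s F`. -/
def IsDefectColoring (G : Finset α) (r s : ℕ) (F : Set (Finset α)) (X₀ : Finset α)
    (X : Fin r → Finset α) : Prop :=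
  X₀ ⊆ G ∧ EquitableParts (G \ X₀) X ∧ ∀ A ∈ F, ∀ i, ¬ subS s A (X i)

variable {G : Finset α} {r s : ℕ} {F : Set (Finset α)}

lemma ecd_le {X₀ : Finset α} {X : Fin r → Finset α} (h : IsDefectColoring G r s F X₀ X) :
    ecd G r s F ≤ #X₀ :=
  Nat.sInf_le ⟨X₀, h.1, rfl, X, h.2⟩

lemma le_ecd {b : ℕ} (hne : ∃ X₀ X, IsDefectColoring G r s F X₀ X)
    (hb : ∀ X₀ X, IsDefectColoring G r s F X₀ X → b ≤ #X₀) : b ≤ ecd G r s F := by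
  obtain ⟨X₀, X, h⟩ := hne
  refine le_csInf ⟨_, X₀, h.1, rfl, X, h.2⟩ ?_
  rintro m ⟨X₀, hX₀, rfl, X, hX⟩
  exact hb X₀ X ⟨hX₀, hX⟩

lemma card_sub_le_of_isDefectColoring {k : ℕ} (hs : s < k) (hkG : k ≤ #G)
    (hF : ∀ A ⊆ G, #A = k → A ∈ F) {X₀ : Finset α} {X : Fin r → Finset α}
    (h : IsDefectColoring G r s F X₀ X) : #G - r * (k - s - 1) ≤ #X₀ := by
  obtain ⟨hX₀, ⟨-, hX, -⟩, hfree⟩ := h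
  by_contra! hlt
  obtain ⟨i, hi⟩ := exists_lt_card_of_biUnion_eq (t := k - s - 1) hX <| by
    rw [Fintype.card_fin, card_sdiff_of_subset hX₀]
    omega
  have hXiG : X i ⊆ G := (subset_biUnion_of_mem X (mem_univ i)).trans (hX ▸ sdiff_subset)
  obtain ⟨A, hAG, hA, hAX⟩ := exists_card_eq_subS (s := s) hXiG (by omega) hkG
  exact hfree A (hF A hAG hA) i hAX

end Coloring

section Blocks

def block (t i : ℕ) : Finset ℕ := Ioc (i * t) ((i + 1) * t)

lemma card_block (t i : ℕ) : #(block t i) = t := by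
  simp only [block, Nat.card_Ioc, add_mul, one_mul, Nat.add_sub_cancel_left]

lemma disjoint_block {t i j : ℕ} (hij : i ≠ j) : Disjoint (block t i) (block t j) := by
  refine disjoint_left.mpr fun x hxi hxj => hij ?_
  simp only [block, mem_Ioc] at hxi hxj
  have hi : i < j + 1 := Nat.lt_of_mul_lt_mul_right (hxi.1.trans_le hxj.2)
  have hj : j < i + 1 := Nat.lt_of_mul_lt_mul_right (hxj.1.trans_le hxi.2)
  omega

lemma biUnion_block (r t : ℕ) :
    (univ : Finset (Fin r)).biUnion (fun i => block t i) = Ioc 0 (r * t) := by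
  ext x
  simp only [mem_biUnion, mem_univ, true_and, block, mem_Ioc]
  constructor
  · rintro ⟨i, hix, hxi⟩
    exact ⟨by omega, hxi.trans (Nat.mul_le_mul_right t i.isLt)⟩
  · rintro ⟨hx, hxr⟩
    have ht : 0 < t := Nat.pos_of_ne_zero fun ht => by rw [ht, mul_zero] at hxr; omega
    have hlt : (x - 1) / t < r := (Nat.div_lt_iff_lt_mul ht).mpr (by omega)
    have hlo := Nat.div_mul_le_self (x - 1) t
    have hhi := Nat.lt_div_mul_add (a := x - 1) ht
    refine ⟨⟨(x - 1) / t, hlt⟩, ?_, ?_⟩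
    · show (x - 1) / t * t < x
      omega
    · show x ≤ ((x - 1) / t + 1) * t
      rw [add_mul, one_mul]
      omega

lemma isDefectColoring_block {n r s t : ℕ} {F : Set (Finset ℕ)} (hn : r * t ≤ n)
    (hF : ∀ A ∈ F, t + s < #A) :
    IsDefectColoring (Icc 1 n) r s F (Ioc (r * t) n) (fun i => block t i) := by
  refine ⟨?_, ⟨fun i j hij => disjoint_block (Fin.val_injective.ne hij), ?_, ?_⟩, ?_⟩
  · intro x
    simp only [mem_Ioc, mem_Icc]
    omega
  · ext x
    simp only [biUnion_block, mem_Ioc, mem_sdiff, mem_Icc]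
    omega
  · simp only [card_block, le_add_iff_nonneg_right, zero_le, implies_true]
  · intro A hA i
    exact not_subS_of_card_add_lt (by rw [card_block]; exact hF A hA)

end Blocks

lemma Hfam_eq_kSubsets {n k a s : ℕ} (h : a + s < k) : Hfam n k a s = kSubsets n k := by
  ext F
  refine ⟨fun hF => ⟨hF.1, hF.2.1⟩, fun hF => ⟨hF.1, hF.2, not_subS_of_card_add_lt ?_⟩⟩
  rw [Nat.card_Icc, hF.2]
  omega

theorem stmt1_general (n r k s a : ℕ) (hr : 2 ≤ r) (hn : r * k ≤ n)
    (hs : s < k) (ha : a ≤ k - s - 1) :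
    ecd (Finset.Icc 1 n) r s (Hfam n k a s) = n - r * (k - s - 1) := by
  rw [Hfam_eq_kSubsets (by omega)]
  have hrt : r * (k - s - 1) ≤ n := (Nat.mul_le_mul_left r (by omega)).trans hn
  have hkn : k ≤ n := (Nat.le_mul_of_pos_left k (by omega)).trans hn
  have hcol := isDefectColoring_block (s := s) (F := kSubsets n k) hrt
    fun A hA => by rw [hA.2]; omega
  apply le_antisymm
  · simpa only [Nat.card_Ioc] using ecd_le hcol
  · refine le_ecd ⟨_, _, hcol⟩ fun X₀ X h => ?_
    have hcard : #(Icc 1 n) = n := by rw [Nat.card_Icc, Nat.add_sub_cancel]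
    have := card_sub_le_of_isDefectColoring (F := kSubsets n k) hs (by rwa [hcard])
      (fun A hA hAk => ⟨hA, hAk⟩) h
    rwa [hcard] at this

theorem stmt1 (n r k s a : ℕ) (hk : 2 ≤ k) (hr : 2 ≤ r) (hn : r * k ≤ n)
    (hs : s < k) (hna : a + s < n) (ha : a ≤ k - s - 1) :
    ecd (Finset.Icc 1 n) r s (Hfam n k a s) = n - r * (k - s - 1) :=
  stmt1_general n r k s a hr hn hs ha
end

section
/- Let n ≥ rk, 1 ≤ s < k, and let P = {P_1,...,P_l} be a partition of [n] with |P_i| ≤ r, such that at least s+1 nonempty parts of P are disjoint from A = {n-a+1,...,n}. Then the pair (H(n,k,a,s), P) is ⌊s/2⌋-good: whenever B is P-admissible and there exists F ∈ H(n,k,a,s) with F ⊆_{⌊s/2⌋} B, there exists a P-admissible F' ∈ H(n,k,a,s) with F' ⊆_{⌊s/2⌋} B. -/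
open Finset

/-! Since `F` misses `B` in at most `m = ⌊s/2⌋` points, keep `k - m` points `S ⊆ F ∩ B`, as
many as possible of them outside `A`; `S` is admissible because `B` is. At most `k - m` parts meet
`S` while at least `k` parts are nonempty (as `r k ≤ n`), so `m` nonempty parts avoid `S`: choose
them, preferring the parts of `Q`, and add one point of each. The parts of `Q` that meet `S` give
distinct points of `S \ A`, the chosen parts of `Q` give further points outside `A`, and either way
the result has more than `s` points outside `A`. -/

theorem subS_iff_card_sdiff_le {α : Type*} [DecidableEq α] {s : ℕ} {A B : Finset α} :
    subS s A B ↔ #(A \ B) ≤ s := by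
  refine ⟨fun ⟨E, hE, hAE⟩ => ?_, fun h => ⟨A \ B, h, ?_⟩⟩
  · refine (card_le_card fun x hx => ?_).trans hE
    rw [mem_sdiff] at hx
    by_contra hxE
    exact hx.2 (hAE (mem_sdiff.2 ⟨hx.1, hxE⟩))
  · rw [sdiff_sdiff_self_left]
    exact inter_subset_right

namespace Finset

variable {α : Type*} [DecidableEq α]

theorem card_le_card_of_forall_not_disjoint {R : Finset (Finset α)} {X : Finset α}
    (hR : (R : Set (Finset α)).PairwiseDisjoint id) (hX : ∀ p ∈ R, ¬Disjoint p X) :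
    #R ≤ #X :=
  calc #R ≤ #(R.biUnion (· ∩ X)) :=
        card_le_card_biUnion (hR.mono_on fun _ _ => inter_subset_left)
          fun p hp => not_disjoint_iff_nonempty_inter.1 (hX p hp)
    _ ≤ #X := card_le_card (biUnion_subset.2 fun _ _ => inter_subset_right)

theorem card_sup_le_mul_card_filter_nonempty {P : Finset (Finset α)} {r : ℕ}
    (hPr : ∀ p ∈ P, #p ≤ r) : #(P.sup id) ≤ r * #{p ∈ P | p.Nonempty} :=
  calc #(P.sup id) ≤ ∑ p ∈ P, #p := by rw [sup_eq_biUnion]; exact card_biUnion_le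
    _ = ∑ p ∈ P with p.Nonempty, #p :=
      (sum_filter_of_ne fun _ _ h => card_pos.1 (by omega)).symm
    _ ≤ r * #{p ∈ P | p.Nonempty} := by
      rw [mul_comm, ← smul_eq_mul, ← sum_const]
      exact sum_le_sum fun p hp => hPr p (filter_subset _ _ hp)

theorem exists_transversal {R : Finset (Finset α)}
    (hR : (R : Set (Finset α)).PairwiseDisjoint id) (hne : ∀ p ∈ R, p.Nonempty) :
    ∃ T ⊆ R.sup id, #T = #R ∧ ∀ p ∈ R, #(T ∩ p) = 1 := by
  have hpoint : ∀ p ∈ R, ∃ q ⊆ p, #q = 1 := fun p hp =>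
    exists_subset_card_eq (card_pos.2 (hne p hp))
  choose! t hts htcard using hpoint
  have ht : (R : Set (Finset α)).PairwiseDisjoint t := hR.mono_on hts
  have hTp : ∀ p ∈ R, R.biUnion t ∩ p = t p := by
    intro p hp
    ext x
    simp only [mem_inter, mem_biUnion]
    refine ⟨fun ⟨⟨q, hq, hxq⟩, hxp⟩ => ?_, fun hx => ⟨⟨p, hp, hx⟩, hts p hp hx⟩⟩
    obtain rfl : q = p := hR.elim hq hp (not_disjoint_iff.2 ⟨x, hts q hq hxq, hxp⟩)
    exact hxq
  refine ⟨R.biUnion t, ?_, ?_, fun p hp => by rw [hTp p hp, htcard p hp]⟩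
  · rw [sup_eq_biUnion]
    exact biUnion_mono fun p hp => hts p hp
  · rw [card_biUnion ht, sum_congr rfl htcard, card_eq_sum_ones]

theorem exists_subset_card_eq_le_card_sdiff {X A : Finset α} {c j : ℕ}
    (hj : j ≤ #(X \ A)) (hjc : j ≤ c) (hc : c ≤ #X) :
    ∃ S ⊆ X, #S = c ∧ j ≤ #(S \ A) := by
  obtain ⟨W, hW, hWcard⟩ := exists_subset_card_eq hj
  obtain ⟨S, hWS, hSX, hScard⟩ :=
    exists_subsuperset_card_eq (hW.trans sdiff_subset) (hWcard ▸ hjc) hc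
  refine ⟨S, hSX, hScard, hWcard ▸ card_le_card fun x hx => ?_⟩
  exact mem_sdiff.2 ⟨hWS hx, (mem_sdiff.1 (hW hx)).2⟩

theorem not_disjoint_sdiff_of_disjoint {p X A : Finset α}
    (hX : ¬Disjoint p X) (hA : Disjoint p A) : ¬Disjoint p (X \ A) := by
  obtain ⟨x, hxp, hxX⟩ := not_disjoint_iff.1 hX
  exact not_disjoint_iff.2 ⟨x, hxp, mem_sdiff.2 ⟨hxX, disjoint_left.1 hA hxp⟩⟩

theorem disjoint_sup_id_of_notMem {P R : Finset (Finset α)} {p : Finset α}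
    (hP : (P : Set (Finset α)).PairwiseDisjoint id) (hRP : R ⊆ P) (hp : p ∈ P)
    (hpR : p ∉ R) : Disjoint (R.sup id) p :=
  Finset.disjoint_sup_left.2 fun _ hq => hP (hRP hq) hp (ne_of_mem_of_not_mem hq hpR)

end Finset

theorem Adm.mono {P : Finset (Finset ℕ)} {S B : Finset ℕ} (hB : Adm P B) (hSB : S ⊆ B) :
    Adm P S :=
  fun p hp => (card_le_card (inter_subset_inter_right hSB)).trans (hB p hp)

theorem Adm.union {P : Finset (Finset ℕ)} {S T : Finset ℕ} (hS : Adm P S) (hT : Adm P T)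
    (hST : ∀ p ∈ P, Disjoint S p ∨ Disjoint T p) : Adm P (S ∪ T) := by
  intro p hp
  rw [union_inter_distrib_right]
  rcases hST p hp with h | h
  · rw [disjoint_iff_inter_eq_empty.1 h, empty_union]
    exact hT p hp
  · rw [disjoint_iff_inter_eq_empty.1 h, union_empty]
    exact hS p hp

theorem adm_of_subset_sup {P R : Finset (Finset ℕ)} {T : Finset ℕ}
    (hP : (P : Set (Finset ℕ)).PairwiseDisjoint id) (hRP : R ⊆ P) (hTR : T ⊆ R.sup id)
    (hT : ∀ p ∈ R, #(T ∩ p) ≤ 1) : Adm P T := by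
  intro p hp
  by_cases hpR : p ∈ R
  · exact hT p hpR
  · rw [disjoint_iff_inter_eq_empty.1 ((disjoint_sup_id_of_notMem hP hRP hp hpR).mono_left hTR),
      card_empty]
    exact zero_le_one

theorem exists_adm_union_card_sdiff {P Q : Finset (Finset ℕ)} {A S : Finset ℕ} {m s : ℕ}
    (hP : (P : Set (Finset ℕ)).PairwiseDisjoint id) (hPS : #S + m ≤ #{p ∈ P | p.Nonempty})
    (hQP : Q ⊆ P) (hQ : s < #Q) (hQA : ∀ p ∈ Q, p.Nonempty ∧ Disjoint p A)
    (hS : Adm P S) (hSA : s < #(S \ A) + m) :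
    ∃ T ⊆ P.sup id, Disjoint S T ∧ #T = m ∧ Adm P (S ∪ T) ∧ s < #((S ∪ T) \ A) := by
  set D := {p ∈ P | p.Nonempty ∧ Disjoint p S}
  have hD : m ≤ #D := by
    have hmeet : #{p ∈ P | ¬Disjoint p S} ≤ #S :=
      card_le_card_of_forall_not_disjoint (hP.subset (filter_subset _ _))
        fun p hp => (mem_filter.1 hp).2
    have hcover : {p ∈ P | p.Nonempty} ⊆ D ∪ {p ∈ P | ¬Disjoint p S} := by
      intro p
      simp only [D, mem_union, mem_filter]
      tauto
    have := (card_le_card hcover).trans (card_union_le _ _)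
    omega
  set Q' := {p ∈ Q | Disjoint p S}
  have hQ' : #Q ≤ #Q' + #(S \ A) := by
    have hmeet : #{p ∈ Q | ¬Disjoint p S} ≤ #(S \ A) :=
      card_le_card_of_forall_not_disjoint (hP.subset ((filter_subset _ _).trans hQP))
        fun p hp => by
          rw [mem_filter] at hp
          exact not_disjoint_sdiff_of_disjoint hp.2 (hQA p hp.1).2
    have hcover : Q ⊆ Q' ∪ {p ∈ Q | ¬Disjoint p S} := by
      intro p
      simp only [Q', mem_union, mem_filter]
      tauto
    have := (card_le_card hcover).trans (card_union_le _ _)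
    omega
  have hQ'D : Q' ⊆ D := fun p hp => by
    obtain ⟨hpQ, hpS⟩ := mem_filter.1 hp
    exact mem_filter.2 ⟨hQP hpQ, (hQA p hpQ).1, hpS⟩
  obtain ⟨Q'', hQ''Q', hQ''card⟩ := exists_subset_card_eq (min_le_right m #Q')
  obtain ⟨R, hQ''R, hRD, hRcard⟩ :=
    exists_subsuperset_card_eq (hQ''Q'.trans hQ'D) (hQ''card ▸ min_le_left _ _) hD
  have hRP : R ⊆ P := hRD.trans (filter_subset _ _)
  have hR : ∀ p ∈ R, p.Nonempty ∧ Disjoint p S := fun p hp => (mem_filter.1 (hRD hp)).2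
  obtain ⟨T, hTR, hTcard, hTp⟩ := exists_transversal (hP.subset hRP) fun p hp => (hR p hp).1
  have hST : Disjoint S T :=
    (Finset.disjoint_sup_right.2 fun p hp => (hR p hp).2.symm).mono_right hTR
  have hTA : #Q'' ≤ #(T \ A) := by
    refine card_le_card_of_forall_not_disjoint (hP.subset (hQ''R.trans hRP)) fun p hp => ?_
    refine not_disjoint_sdiff_of_disjoint ?_ (hQA p (filter_subset _ _ (hQ''Q' hp))).2
    rw [disjoint_comm, disjoint_iff_inter_eq_empty, ← card_eq_zero, hTp p (hQ''R hp)]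
    exact one_ne_zero
  refine ⟨T, hTR.trans (sup_mono hRP), hST, hTcard.trans hRcard, hS.union
    (adm_of_subset_sup hP hRP hTR fun p hp => (hTp p hp).le) fun p hp => ?_, ?_⟩
  · by_cases hpR : p ∈ R
    · exact .inl (hR p hpR).2.symm
    · exact .inr ((disjoint_sup_id_of_notMem hP hRP hp hpR).mono_left hTR)
  · rw [union_sdiff_distrib, card_union_of_disjoint (hST.mono sdiff_subset sdiff_subset)]
    omega

theorem exists_adm_card_sdiff_le {P Q : Finset (Finset ℕ)} {A B F : Finset ℕ} {k m s : ℕ}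
    (hP : (P : Set (Finset ℕ)).PairwiseDisjoint id) (hk : k ≤ #{p ∈ P | p.Nonempty})
    (hQP : Q ⊆ P) (hQ : s < #Q) (hQA : ∀ p ∈ Q, p.Nonempty ∧ Disjoint p A)
    (hB : Adm P B) (hF : #F = k) (hFA : s < #(F \ A)) (hFB : #(F \ B) ≤ m) (hmk : m ≤ k) :
    ∃ F' ⊆ B ∪ P.sup id, Adm P F' ∧ #F' = k ∧ s < #(F' \ A) ∧ #(F' \ B) ≤ m := by
  have hFAk : #(F \ A) ≤ k := hF ▸ card_le_card sdiff_subset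
  have hFB' : k - m ≤ #(F ∩ B) := by
    have := card_sdiff_add_card_inter F B
    omega
  have hFBA : s + 1 - m ≤ #((F ∩ B) \ A) := by
    have hcover : F \ A ⊆ (F ∩ B) \ A ∪ F \ B := by
      intro x
      simp only [mem_union, mem_sdiff, mem_inter]
      tauto
    have := (card_le_card hcover).trans (card_union_le _ _)
    omega
  obtain ⟨S, hSFB, hScard, hSA⟩ := exists_subset_card_eq_le_card_sdiff hFBA (by omega) hFB'
  have hSB : S ⊆ B := hSFB.trans inter_subset_right
  obtain ⟨T, hTP, hST, hTcard, hadm, hF'A⟩ :=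
    exists_adm_union_card_sdiff (m := m) hP (by omega) hQP hQ hQA (hB.mono hSB) (by omega)
  refine ⟨S ∪ T, union_subset_union hSB hTP, hadm, by rw [card_union_of_disjoint hST]; omega,
    hF'A, ?_⟩
  calc #((S ∪ T) \ B) ≤ #T := card_le_card <| by
        rw [union_sdiff_distrib, sdiff_eq_empty_iff_subset.2 hSB, empty_union]
        exact sdiff_subset
    _ = m := hTcard

theorem stmt9_general (n r k s a : ℕ) (P : Finset (Finset ℕ)) (hn : r * k ≤ n)
    (hP : IsPartition n P) (hPr : ∀ p ∈ P, p.card ≤ r)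
    (hQ : ∃ Q ⊆ P, Q.card = s + 1 ∧
      ∀ p ∈ Q, p.Nonempty ∧ Disjoint p (Finset.Icc (n - a + 1) n)) :
    ∀ B ⊆ Finset.Icc 1 n, Adm P B →
      (∃ F ∈ Hfam n k a s, subS (s / 2) F B) →
      ∃ F' ∈ Hfam n k a s, Adm P F' ∧ subS (s / 2) F' B := by
  rintro B hB hBadm ⟨F, ⟨-, hF, hFA⟩, hFB⟩
  obtain ⟨Q, hQP, hQcard, hQA⟩ := hQ
  rw [subS_iff_card_sdiff_le, not_le] at hFA
  rw [subS_iff_card_sdiff_le] at hFB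
  obtain ⟨p, hp⟩ : Q.Nonempty := card_pos.1 (by omega)
  have hr : 0 < r := (card_pos.2 (hQA p hp).1).trans_le (hPr p (hQP hp))
  have hk : k ≤ #{p ∈ P | p.Nonempty} := by
    refine Nat.le_of_mul_le_mul_left (hn.trans ?_) hr
    simpa [hP.2] using card_sup_le_mul_card_filter_nonempty hPr
  have hFAk : #(F \ Finset.Icc (n - a + 1) n) ≤ k := hF ▸ card_le_card sdiff_subset
  obtain ⟨F', hF'sub, hadm, hF'k, hF'A, hF'B⟩ :=
    exists_adm_card_sdiff_le hP.1 hk hQP (by omega) hQA hBadm hF hFA hFB (by omega)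
  refine ⟨F', ⟨?_, hF'k, ?_⟩, hadm, subS_iff_card_sdiff_le.2 hF'B⟩
  · exact hP.2 ▸ hF'sub.trans (union_subset (hP.2 ▸ hB) le_rfl)
  · rw [subS_iff_card_sdiff_le]
    omega

theorem stmt9 (n r k s a : ℕ) (P : Finset (Finset ℕ)) (hn : r * k ≤ n)
    (hs1 : 1 ≤ s) (hs : s < k) (hkn : k < n) (hak : a < k)
    (hP : IsPartition n P) (hPr : ∀ p ∈ P, p.card ≤ r)
    (hQ : ∃ Q ⊆ P, Q.card = s + 1 ∧
      ∀ p ∈ Q, p.Nonempty ∧ Disjoint p (Finset.Icc (n - a + 1) n)) :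
    ∀ B ⊆ Finset.Icc 1 n, Adm P B →
      (∃ F ∈ Hfam n k a s, subS (s / 2) F B) →
      ∃ F' ∈ Hfam n k a s, Adm P F' ∧ subS (s / 2) F' B :=
  stmt9_general n r k s a P hn hP hPr hQ
end
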